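/- Let d ≥ 1, λ₁, λ₂, r > 0 and c₀ ∈ (0,1). Let Λ ⊂ ℤ^d be a finite set and θ assign to each x ∈ Λ a probability vector θ(x) = (θ₀(x),θ₁(x),θ₂(x),θ₃(x)) with all entries ≥ c₀; let ν_θ be the corresponding product measure. Define the reaction generator 𝕃f(η) = ∑_{x∈Λ} [ a(η(x)) (f(W_x η) − f(η)) + c(x,η) (f(S_x η) − f(η)) ], where a(s) = r if s ∈ {0,1} and a(s) = 1 if s ∈ {2,3}; c(x,η) = β(x,η) if η(x) ∈ {0,2} and c(x,η) = 1 if η(x) ∈ {1,3}; β(x,η) = ∑_{y∈Λ, ‖y−x‖=1} (λ₁·1{η(y)=1} + λ₂·1{η(y)=3}); W_x η is η with the value at x changed by the involution 0↔2, 1↔3; and S_x η is η with the value at x changed by the involution 0↔1, 2↔3. Then there exists a constant A₁ > 0, depending only on λ₁, λ₂, r, d and c₀, such that for every f : {0,1,2,3}^Λ → [0,∞), ∫ √f · (𝕃√f) dν_θ ≤ A₁ |Λ| ∫ f dν_θ. -/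
import Mathlib


open Finset

noncomputable section

/-- Weight of a configuration under the product measure `ν_θ`. -/
def prodWeight {d : ℕ} (Λ : Finset (Fin d → ℤ)) (θ : (Fin d → ℤ) → Fin 4 → ℝ)
    (ζ : ↥Λ → Fin 4) : ℝ :=
  ∏ x : ↥Λ, θ x.1 (ζ x)

/-- The involution `0 ↔ 2, 1 ↔ 3` (flipping the sterile population). -/
def wFlip : Fin 4 → Fin 4 := ![2, 3, 0, 1]

/-- The involution `0 ↔ 1, 2 ↔ 3` (flipping the wild population). -/
def sFlip : Fin 4 → Fin 4 := ![1, 0, 3, 2]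

/-- The sterile-population rate: `r` in states `0,1`, `1` in states `2,3`. -/
def aRate (r : ℝ) : Fin 4 → ℝ := ![r, r, 1, 1]

/-- The birth rate `β(x,η) = ∑_{y ∈ Λ, ‖y−x‖=1} (λ₁ 1{η(y)=1} + λ₂ 1{η(y)=3})`
(for integer points, `‖y−x‖ = 1` iff `∑_k |y_k − x_k| = 1`). -/
def betaRate {d : ℕ} (Λ : Finset (Fin d → ℤ)) (l1 l2 : ℝ) (x : ↥Λ)
    (ζ : ↥Λ → Fin 4) : ℝ :=
  ∑ y : ↥Λ,
    if (∑ k : Fin d, |y.1 k - x.1 k|) = 1 then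
      l1 * (if ζ y = 1 then (1 : ℝ) else 0) + l2 * (if ζ y = 3 then (1 : ℝ) else 0)
    else 0

/-- The generator of the contact process with random slowdowns in state space
`{0,1,2,3}^Λ`. -/
def reactGen {d : ℕ} (Λ : Finset (Fin d → ℤ)) (l1 l2 r : ℝ)
    (f : (↥Λ → Fin 4) → ℝ) (ζ : ↥Λ → Fin 4) : ℝ :=
  ∑ x : ↥Λ,
    (aRate r (ζ x) * (f (Function.update ζ x (wFlip (ζ x))) - f ζ)
      + (if ζ x = 0 ∨ ζ x = 2 then betaRate Λ l1 l2 x ζ else 1) *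
          (f (Function.update ζ x (sFlip (ζ x))) - f ζ))

/-! ### Auxiliary lemmas -/


lemma sqrt_mul_sqrt_le (a b : ℝ) (ha : 0 ≤ a) (hb : 0 ≤ b) :
    Real.sqrt a * Real.sqrt b ≤ (a + b) / 2 := by
  nlinarith [Real.sq_sqrt ha, Real.sq_sqrt hb, sq_nonneg (Real.sqrt a - Real.sqrt b)]

lemma neighbor_decomp {d : ℕ} (x y : Fin d → ℤ)
    (h : (∑ k : Fin d, |y k - x k|) = 1) :
    ∃ k : Fin d, y = Function.update x k (x k + 1) ∨ y = Function.update x k (x k - 1) := by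
  have hne : ∃ k, y k ≠ x k := by
    by_contra hc
    push_neg at hc
    simp [hc] at h
  obtain ⟨k, hk⟩ := hne
  have habs : 1 ≤ |y k - x k| := Int.one_le_abs (sub_ne_zero.mpr hk)
  have hsplit : |y k - x k| + ∑ j ∈ Finset.univ.erase k, |y j - x j| = 1 := by
    rw [Finset.add_sum_erase Finset.univ (fun j => |y j - x j|) (Finset.mem_univ k)]; exact h
  have hrestnn : 0 ≤ ∑ j ∈ Finset.univ.erase k, |y j - x j| :=
    Finset.sum_nonneg fun j _ => abs_nonneg _
  have hrest : ∑ j ∈ Finset.univ.erase k, |y j - x j| = 0 := by omega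
  have habs1 : |y k - x k| = 1 := by omega
  have hothers : ∀ j, j ≠ k → y j = x j := by
    intro j hj
    have h0 := (Finset.sum_eq_zero_iff_of_nonneg (fun i _ => abs_nonneg _)).mp hrest j
      (Finset.mem_erase.mpr ⟨hj, Finset.mem_univ j⟩)
    have := abs_eq_zero.mp h0
    omega
  refine ⟨k, ?_⟩
  rcases (abs_eq (by norm_num : (0:ℤ) ≤ 1)).mp habs1 with h1 | h1
  · left; funext j
    by_cases hj : j = k
    · subst hj; rw [Function.update_self]; omega
    · rw [Function.update_of_ne hj]; exact hothers j hj
  · right; funext j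
    by_cases hj : j = k
    · subst hj; rw [Function.update_self]; omega
    · rw [Function.update_of_ne hj]; exact hothers j hj

lemma neighbor_card {d : ℕ} (Λ : Finset (Fin d → ℤ)) (x : Fin d → ℤ) :
    ((Λ.filter fun y => (∑ k : Fin d, |y k - x k|) = 1).card : ℝ) ≤ 2 * d := by
  have hsub : Λ.filter (fun y => (∑ k : Fin d, |y k - x k|) = 1) ⊆
      (Finset.univ : Finset (Fin d × Bool)).image
        (fun p => Function.update x p.1 (x p.1 + if p.2 then 1 else -1)) := by
    intro y hy
    obtain ⟨k, hk | hk⟩ := neighbor_decomp x y (Finset.mem_filter.mp hy).2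
    · exact Finset.mem_image.mpr ⟨(k, true), Finset.mem_univ _, by simp [hk]⟩
    · exact Finset.mem_image.mpr ⟨(k, false), Finset.mem_univ _, by
        simp [hk, sub_eq_add_neg]⟩
  have h1 := Finset.card_le_card hsub
  have h2 := Finset.card_image_le (s := (Finset.univ : Finset (Fin d × Bool)))
    (f := fun p => Function.update x p.1 (x p.1 + if p.2 then 1 else -1))
  have h3 : (Finset.univ : Finset (Fin d × Bool)).card = d * 2 := by
    simp [Finset.card_univ]
  have : (Λ.filter fun y => (∑ k : Fin d, |y k - x k|) = 1).card ≤ d * 2 :=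
    le_trans h1 (le_trans h2 (le_of_eq h3))
  calc ((Λ.filter fun y => (∑ k : Fin d, |y k - x k|) = 1).card : ℝ) ≤ (d * 2 : ℕ) := by
        exact_mod_cast this
    _ = 2 * d := by push_cast; ring

lemma betaRate_nonneg {d : ℕ} (Λ : Finset (Fin d → ℤ)) (l1 l2 : ℝ)
    (hl1 : 0 < l1) (hl2 : 0 < l2) (x : ↥Λ) (ζ : ↥Λ → Fin 4) :
    0 ≤ betaRate Λ l1 l2 x ζ := by
  apply Finset.sum_nonneg
  intro y _
  split
  · have h1 : (0:ℝ) ≤ if ζ y = 1 then (1:ℝ) else 0 := by split <;> norm_num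
    have h3 : (0:ℝ) ≤ if ζ y = 3 then (1:ℝ) else 0 := by split <;> norm_num
    nlinarith
  · exact le_refl 0

lemma betaRate_le {d : ℕ} (Λ : Finset (Fin d → ℤ)) (l1 l2 : ℝ)
    (hl1 : 0 < l1) (hl2 : 0 < l2) (x : ↥Λ) (ζ : ↥Λ → Fin 4) :
    betaRate Λ l1 l2 x ζ ≤ (l1 + l2) * (2 * d) := by
  have h1 : betaRate Λ l1 l2 x ζ ≤
      ∑ y : ↥Λ, if (∑ k : Fin d, |y.1 k - x.1 k|) = 1 then (l1 + l2) else 0 := by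
    apply Finset.sum_le_sum
    intro y _
    split
    · have ha : (if ζ y = 1 then (1:ℝ) else 0) ≤ 1 := by split <;> norm_num
      have hb : (if ζ y = 3 then (1:ℝ) else 0) ≤ 1 := by split <;> norm_num
      have ha' : (0:ℝ) ≤ if ζ y = 1 then (1:ℝ) else 0 := by split <;> norm_num
      have hb' : (0:ℝ) ≤ if ζ y = 3 then (1:ℝ) else 0 := by split <;> norm_num
      nlinarith
    · exact le_refl 0
  have h2 : (∑ y : ↥Λ, if (∑ k : Fin d, |y.1 k - x.1 k|) = 1 then (l1 + l2) else 0)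
      = ((Λ.filter fun y => (∑ k : Fin d, |y k - x.1 k|) = 1).card : ℝ) * (l1 + l2) := by
    rw [Finset.sum_coe_sort Λ (fun y => if (∑ k : Fin d, |y k - x.1 k|) = 1 then (l1+l2) else 0)]
    rw [← Finset.sum_filter, Finset.sum_const, nsmul_eq_mul]
  calc betaRate Λ l1 l2 x ζ
      ≤ ((Λ.filter fun y => (∑ k : Fin d, |y k - x.1 k|) = 1).card : ℝ) * (l1 + l2) :=
        h1.trans (le_of_eq h2)
    _ ≤ (2 * d) * (l1 + l2) := by
        apply mul_le_mul_of_nonneg_right (neighbor_card Λ x.1)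
        linarith
    _ = (l1 + l2) * (2 * d) := by ring

lemma prodWeight_nonneg {d : ℕ} (Λ : Finset (Fin d → ℤ)) (θ : (Fin d → ℤ) → Fin 4 → ℝ)
    (c0 : ℝ) (hc0 : 0 < c0) (hθ : ∀ x ∈ Λ, ∀ j, c0 ≤ θ x j) (ζ : ↥Λ → Fin 4) :
    0 ≤ prodWeight Λ θ ζ :=
  Finset.prod_nonneg fun y _ => le_trans hc0.le (hθ y.1 y.2 (ζ y))

lemma prodWeight_update_le {d : ℕ} (Λ : Finset (Fin d → ℤ)) (θ : (Fin d → ℤ) → Fin 4 → ℝ)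
    (c0 : ℝ) (hc0 : 0 < c0) (hθ : ∀ x ∈ Λ, ∀ j, c0 ≤ θ x j)
    (hsum : ∀ x ∈ Λ, ∑ j, θ x j = 1) (x : ↥Λ) (v : Fin 4) (ζ : ↥Λ → Fin 4) :
    c0 * prodWeight Λ θ (Function.update ζ x v) ≤ prodWeight Λ θ ζ := by
  have e1 : prodWeight Λ θ (Function.update ζ x v)
      = θ x.1 v * ∏ y ∈ Finset.univ.erase x, θ y.1 (ζ y) := by
    rw [prodWeight, ← Finset.mul_prod_erase Finset.univ
      (fun y => θ y.1 (Function.update ζ x v y)) (Finset.mem_univ x)]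
    congr 1
    · rw [Function.update_self]
    · exact Finset.prod_congr rfl fun y hy => by
        rw [Function.update_of_ne (Finset.mem_erase.mp hy).1]
  have e2 : prodWeight Λ θ ζ = θ x.1 (ζ x) * ∏ y ∈ Finset.univ.erase x, θ y.1 (ζ y) := by
    rw [prodWeight, ← Finset.mul_prod_erase Finset.univ
      (fun y : ↥Λ => θ y.1 (ζ y)) (Finset.mem_univ x)]
  rw [e1, e2]
  have hP : 0 ≤ ∏ y ∈ Finset.univ.erase x, θ y.1 (ζ y) :=
    Finset.prod_nonneg fun y _ => le_trans hc0.le (hθ y.1 y.2 (ζ y))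
  have hv1 : θ x.1 v ≤ 1 := by
    rw [← hsum x.1 x.2]
    exact Finset.single_le_sum (fun j _ => le_trans hc0.le (hθ x.1 x.2 j)) (Finset.mem_univ v)
  have hx : c0 ≤ θ x.1 (ζ x) := hθ x.1 x.2 (ζ x)
  nlinarith [mul_nonneg (mul_nonneg hc0.le (sub_nonneg.mpr hv1)) hP,
    mul_nonneg (sub_nonneg.mpr hx) hP]

lemma flip_sum_le {d : ℕ} (Λ : Finset (Fin d → ℤ)) (θ : (Fin d → ℤ) → Fin 4 → ℝ)
    (c0 : ℝ) (hc0 : 0 < c0) (hθ : ∀ x ∈ Λ, ∀ j, c0 ≤ θ x j)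
    (hsum : ∀ x ∈ Λ, ∑ j, θ x j = 1) (x : ↥Λ)
    (φ : Fin 4 → Fin 4) (hφ : Function.Involutive φ)
    (F : (↥Λ → Fin 4) → ℝ) (hF : ∀ ζ, 0 ≤ F ζ) :
    ∑ ζ : ↥Λ → Fin 4, prodWeight Λ θ ζ * F (Function.update ζ x (φ (ζ x)))
      ≤ (1 / c0) * ∑ ζ : ↥Λ → Fin 4, prodWeight Λ θ ζ * F ζ := by
  set T : (↥Λ → Fin 4) → (↥Λ → Fin 4) := fun ζ => Function.update ζ x (φ (ζ x)) with hT
  have hTinv : Function.Involutive T := by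
    intro ζ; funext y
    by_cases hy : y = x
    · subst hy
      simp [T, Function.update_self, hφ (ζ y)]
    · simp [T, Function.update_of_ne hy]
  have hre : ∑ ζ : ↥Λ → Fin 4, prodWeight Λ θ ζ * F (T ζ)
      = ∑ ζ : ↥Λ → Fin 4, prodWeight Λ θ (T ζ) * F ζ := by
    refine Fintype.sum_equiv hTinv.toPerm _ _ (fun ζ => ?_)
    simp only [Function.Involutive.coe_toPerm]
    rw [hTinv ζ]
  calc ∑ ζ : ↥Λ → Fin 4, prodWeight Λ θ ζ * F (Function.update ζ x (φ (ζ x)))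
      = ∑ ζ : ↥Λ → Fin 4, prodWeight Λ θ (T ζ) * F ζ := hre
    _ ≤ ∑ ζ : ↥Λ → Fin 4, (1 / c0) * (prodWeight Λ θ ζ * F ζ) := by
        apply Finset.sum_le_sum
        intro ζ _
        have h1 : c0 * prodWeight Λ θ (T ζ) ≤ prodWeight Λ θ ζ :=
          prodWeight_update_le Λ θ c0 hc0 hθ hsum x (φ (ζ x)) ζ
        have h2 : prodWeight Λ θ (T ζ) ≤ (1 / c0) * prodWeight Λ θ ζ := by
          rw [div_mul_eq_mul_div, le_div_iff₀ hc0]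
          linarith
        calc prodWeight Λ θ (T ζ) * F ζ ≤ ((1 / c0) * prodWeight Λ θ ζ) * F ζ :=
              mul_le_mul_of_nonneg_right h2 (hF ζ)
          _ = (1 / c0) * (prodWeight Λ θ ζ * F ζ) := by ring
    _ = (1 / c0) * ∑ ζ : ↥Λ → Fin 4, prodWeight Λ θ ζ * F ζ := by
        rw [Finset.mul_sum]

lemma wFlip_invol : Function.Involutive wFlip := by intro j; fin_cases j <;> rfl
lemma sFlip_invol : Function.Involutive sFlip := by intro j; fin_cases j <;> rfl

lemma aRate_nonneg (r : ℝ) (hr : 0 < r) (j : Fin 4) : 0 ≤ aRate r j := by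
  fin_cases j <;> simp [aRate] <;> linarith

lemma aRate_le (r : ℝ) (j : Fin 4) : aRate r j ≤ max r 1 := by
  fin_cases j <;> simp [aRate]

/-- Bound for the reaction part of the generator:
`⟨√f, 𝕃√f⟩_{ν_θ} ≤ A₁ |Λ| ∫ f dν_θ`, with a constant depending only on
`λ₁, λ₂, r, d` and `c₀`. -/
theorem reaction_generator_bound (d : ℕ) (hd : 1 ≤ d) (l1 l2 r : ℝ)
    (hl1 : 0 < l1) (hl2 : 0 < l2) (hr : 0 < r) (c0 : ℝ)
    (hc0 : 0 < c0) (hc0' : c0 < 1) :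
    ∃ A1 > 0,
      ∀ (Λ : Finset (Fin d → ℤ)) (θ : (Fin d → ℤ) → Fin 4 → ℝ),
      (∀ x ∈ Λ, ∀ j, c0 ≤ θ x j) → (∀ x ∈ Λ, ∑ j, θ x j = 1) →
      ∀ f : (↥Λ → Fin 4) → ℝ, (∀ ζ, 0 ≤ f ζ) →
      ∑ ζ : ↥Λ → Fin 4, prodWeight Λ θ ζ *
          (Real.sqrt (f ζ) * reactGen Λ l1 l2 r (fun χ => Real.sqrt (f χ)) ζ)
        ≤ A1 * (Λ.card : ℝ) * ∑ ζ : ↥Λ → Fin 4, prodWeight Λ θ ζ * f ζ := by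
  set Ca : ℝ := max r 1 with hCa
  set Cc : ℝ := max 1 ((l1 + l2) * (2 * d)) with hCc
  have hCapos : 0 < Ca := lt_of_lt_of_le one_pos (le_max_right r 1)
  have hCcpos : 0 < Cc := lt_of_lt_of_le one_pos (le_max_left 1 _)
  have hc0inv : 0 < 1 + 1 / c0 := by positivity
  refine ⟨(Ca + Cc) * (1 + 1 / c0), by positivity, ?_⟩
  intro Λ θ hθ hsumθ f hf
  set w : (↥Λ → Fin 4) → ℝ := prodWeight Λ θ with hw
  set g : (↥Λ → Fin 4) → ℝ := fun ζ => Real.sqrt (f ζ) with hg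
  set I : ℝ := ∑ ζ : ↥Λ → Fin 4, w ζ * f ζ with hI
  have hwnn : ∀ ζ, 0 ≤ w ζ := fun ζ => prodWeight_nonneg Λ θ c0 hc0 hθ ζ
  have hInn : 0 ≤ I := Finset.sum_nonneg fun ζ _ => mul_nonneg (hwnn ζ) (hf ζ)
  -- swap the sums
  have hswap : ∑ ζ : ↥Λ → Fin 4, w ζ * (g ζ * reactGen Λ l1 l2 r g ζ)
      = ∑ x : ↥Λ, ∑ ζ : ↥Λ → Fin 4, w ζ * (g ζ *
          (aRate r (ζ x) * (g (Function.update ζ x (wFlip (ζ x))) - g ζ)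
            + (if ζ x = 0 ∨ ζ x = 2 then betaRate Λ l1 l2 x ζ else 1) *
                (g (Function.update ζ x (sFlip (ζ x))) - g ζ))) := by
    unfold reactGen
    simp_rw [Finset.mul_sum]
    exact Finset.sum_comm
  rw [hswap]
  -- bound each inner sum by (Ca + Cc) * (1 + 1/c0) * I
  have hxbound : ∀ x : ↥Λ, ∑ ζ : ↥Λ → Fin 4, w ζ * (g ζ *
      (aRate r (ζ x) * (g (Function.update ζ x (wFlip (ζ x))) - g ζ)
        + (if ζ x = 0 ∨ ζ x = 2 then betaRate Λ l1 l2 x ζ else 1) *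
            (g (Function.update ζ x (sFlip (ζ x))) - g ζ)))
      ≤ (Ca + Cc) * (1 + 1 / c0) * I := by
    intro x
    have hptw : ∀ ζ : ↥Λ → Fin 4, w ζ * (g ζ *
        (aRate r (ζ x) * (g (Function.update ζ x (wFlip (ζ x))) - g ζ)
          + (if ζ x = 0 ∨ ζ x = 2 then betaRate Λ l1 l2 x ζ else 1) *
              (g (Function.update ζ x (sFlip (ζ x))) - g ζ)))
        ≤ (Ca / 2) * (w ζ * f ζ) + (Ca / 2) * (w ζ * f (Function.update ζ x (wFlip (ζ x))))
          + ((Cc / 2) * (w ζ * f ζ) + (Cc / 2) * (w ζ * f (Function.update ζ x (sFlip (ζ x))))) := by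
      intro ζ
      set a := aRate r (ζ x) with ha
      set c := (if ζ x = 0 ∨ ζ x = 2 then betaRate Λ l1 l2 x ζ else 1) with hc
      have hann : 0 ≤ a := aRate_nonneg r hr (ζ x)
      have haC : a ≤ Ca := aRate_le r (ζ x)
      have hcnn : 0 ≤ c := by
        rw [hc]; split
        · exact betaRate_nonneg Λ l1 l2 hl1 hl2 x ζ
        · norm_num
      have hcC : c ≤ Cc := by
        rw [hc]; split
        · exact le_trans (betaRate_le Λ l1 l2 hl1 hl2 x ζ) (le_max_right 1 _)
        · exact le_max_left 1 _
      have hgnn : 0 ≤ g ζ := Real.sqrt_nonneg _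
      have hgw : 0 ≤ g (Function.update ζ x (wFlip (ζ x))) := Real.sqrt_nonneg _
      have hgs : 0 ≤ g (Function.update ζ x (sFlip (ζ x))) := Real.sqrt_nonneg _
      have h1 : g ζ * g (Function.update ζ x (wFlip (ζ x)))
          ≤ (f ζ + f (Function.update ζ x (wFlip (ζ x)))) / 2 :=
        sqrt_mul_sqrt_le _ _ (hf _) (hf _)
      have h2 : g ζ * g (Function.update ζ x (sFlip (ζ x)))
          ≤ (f ζ + f (Function.update ζ x (sFlip (ζ x)))) / 2 :=
        sqrt_mul_sqrt_le _ _ (hf _) (hf _)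
      have hpt : g ζ * (a * (g (Function.update ζ x (wFlip (ζ x))) - g ζ)
            + c * (g (Function.update ζ x (sFlip (ζ x))) - g ζ))
          ≤ (Ca / 2) * (f ζ + f (Function.update ζ x (wFlip (ζ x))))
            + (Cc / 2) * (f ζ + f (Function.update ζ x (sFlip (ζ x)))) := by
        nlinarith [mul_le_mul haC h1 (mul_nonneg hgnn hgw) hCapos.le,
          mul_le_mul hcC h2 (mul_nonneg hgnn hgs) hCcpos.le,
          mul_nonneg hann (mul_nonneg hgnn hgnn),
          mul_nonneg hcnn (mul_nonneg hgnn hgnn)]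
      calc w ζ * (g ζ * (a * (g (Function.update ζ x (wFlip (ζ x))) - g ζ)
            + c * (g (Function.update ζ x (sFlip (ζ x))) - g ζ)))
          ≤ w ζ * ((Ca / 2) * (f ζ + f (Function.update ζ x (wFlip (ζ x))))
            + (Cc / 2) * (f ζ + f (Function.update ζ x (sFlip (ζ x))))) :=
            mul_le_mul_of_nonneg_left hpt (hwnn ζ)
        _ = (Ca / 2) * (w ζ * f ζ) + (Ca / 2) * (w ζ * f (Function.update ζ x (wFlip (ζ x))))
          + ((Cc / 2) * (w ζ * f ζ)
            + (Cc / 2) * (w ζ * f (Function.update ζ x (sFlip (ζ x))))) := by ring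
    have hJw : ∑ ζ : ↥Λ → Fin 4, w ζ * f (Function.update ζ x (wFlip (ζ x)))
        ≤ (1 / c0) * I :=
      flip_sum_le Λ θ c0 hc0 hθ hsumθ x wFlip wFlip_invol f hf
    have hJs : ∑ ζ : ↥Λ → Fin 4, w ζ * f (Function.update ζ x (sFlip (ζ x)))
        ≤ (1 / c0) * I :=
      flip_sum_le Λ θ c0 hc0 hθ hsumθ x sFlip sFlip_invol f hf
    calc ∑ ζ : ↥Λ → Fin 4, w ζ * (g ζ *
        (aRate r (ζ x) * (g (Function.update ζ x (wFlip (ζ x))) - g ζ)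
          + (if ζ x = 0 ∨ ζ x = 2 then betaRate Λ l1 l2 x ζ else 1) *
              (g (Function.update ζ x (sFlip (ζ x))) - g ζ)))
        ≤ ∑ ζ : ↥Λ → Fin 4,
          ((Ca / 2) * (w ζ * f ζ) + (Ca / 2) * (w ζ * f (Function.update ζ x (wFlip (ζ x))))
          + ((Cc / 2) * (w ζ * f ζ)
            + (Cc / 2) * (w ζ * f (Function.update ζ x (sFlip (ζ x)))))) :=
          Finset.sum_le_sum fun ζ _ => hptw ζ
      _ = (Ca / 2) * I + (Ca / 2) * (∑ ζ : ↥Λ → Fin 4, w ζ * f (Function.update ζ x (wFlip (ζ x))))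
          + ((Cc / 2) * I
            + (Cc / 2) * (∑ ζ : ↥Λ → Fin 4, w ζ * f (Function.update ζ x (sFlip (ζ x))))) := by
          simp only [Finset.sum_add_distrib, ← Finset.mul_sum, hI]
      _ ≤ (Ca / 2) * I + (Ca / 2) * ((1 / c0) * I) + ((Cc / 2) * I + (Cc / 2) * ((1 / c0) * I)) := by
          have := mul_le_mul_of_nonneg_left hJw (by positivity : (0:ℝ) ≤ Ca / 2)
          have := mul_le_mul_of_nonneg_left hJs (by positivity : (0:ℝ) ≤ Cc / 2)
          linarith
      _ ≤ (Ca + Cc) * (1 + 1 / c0) * I := by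
          nlinarith [mul_nonneg (mul_nonneg (add_pos hCapos hCcpos).le hc0inv.le) hInn,
            mul_nonneg hCapos.le hInn, mul_nonneg hCcpos.le hInn,
            mul_nonneg (mul_nonneg hCapos.le (by positivity : (0:ℝ) ≤ 1/c0)) hInn,
            mul_nonneg (mul_nonneg hCcpos.le (by positivity : (0:ℝ) ≤ 1/c0)) hInn]
  calc ∑ x : ↥Λ, ∑ ζ : ↥Λ → Fin 4, w ζ * (g ζ *
      (aRate r (ζ x) * (g (Function.update ζ x (wFlip (ζ x))) - g ζ)
        + (if ζ x = 0 ∨ ζ x = 2 then betaRate Λ l1 l2 x ζ else 1) *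
            (g (Function.update ζ x (sFlip (ζ x))) - g ζ)))
      ≤ ∑ _x : ↥Λ, (Ca + Cc) * (1 + 1 / c0) * I :=
        Finset.sum_le_sum fun x _ => hxbound x
    _ = (Λ.card : ℝ) * ((Ca + Cc) * (1 + 1 / c0) * I) := by
        rw [Finset.sum_const, Finset.card_univ, Fintype.card_coe, nsmul_eq_mul]
    _ = (Ca + Cc) * (1 + 1 / c0) * (Λ.card : ℝ) * I := by ring
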